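/- (Interval placement, achievability / Theorem 2 core) Let I be a finite family of intervals, where each interval i has a start point s(i) and a finish point f(i) with s(i) ≤ f(i), in a linearly ordered set. There exists an assignment of the intervals to columns, such that two intervals placed in the same column never overlap, which uses exactly D columns, where D is the maximum, over all points x, of the number of intervals i with s(i) ≤ x ≤ f(i). Hence the minimum number of columns needed to place the bundled path transitive edges of a decomposition path equals the depth D of its family of intervals. -/

import Mathlib

/-!
Greedy colouring in order of start points. When the interval `a` with the largest start
is added, every earlier interval it meets contains `s a`, so together with `a` they number
at most `D`; hence at most `D - 1` of the columns `0, …, D - 1` are blocked and `a` gets a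
free one. Conversely, the `D` intervals through a point of maximal depth pairwise overlap,
so they occupy `D` distinct columns.
-/

open Finset

namespace IntervalColumns

variable {α ι : Type*} [LinearOrder α] (s f : ι → α)

def IsColumnAssignmentOn (S : Finset ι) (c : ι → ℕ) : Prop :=
  ∀ i ∈ S, ∀ j ∈ S, i ≠ j → c i = c j →
    Disjoint (Set.Icc (s i) (f i)) (Set.Icc (s j) (f j))

variable {s f}

lemma exists_free_column_of_forall_start_le [DecidableEq ι] {S : Finset ι} {a : ι} (ha : a ∉ S)
    (hsa : ∀ j ∈ S, s j ≤ s a) (hsf : s a ≤ f a) {D : ℕ}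
    (hD : #{i ∈ insert a S | s i ≤ s a ∧ s a ≤ f i} ≤ D) (c : ι → ℕ) :
    ∃ m < D, ∀ j ∈ S, c j = m → f j < s a := by
  set blocked := {j ∈ S | s a ≤ f j}
  have hblocked : #blocked < D := by
    have hsub : insert a blocked ⊆ {i ∈ insert a S | s i ≤ s a ∧ s a ≤ f i} := by
      intro i hi
      rcases mem_insert.1 hi with rfl | hi
      · simp [hsf]
      · obtain ⟨hiS, hfi⟩ := mem_filter.1 hi
        exact mem_filter.2 ⟨mem_insert_of_mem hiS, hsa i hiS, hfi⟩
    have ha' : a ∉ blocked := fun h => ha (mem_filter.1 h).1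
    calc #blocked < #(insert a blocked) := by rw [card_insert_of_notMem ha']; omega
      _ ≤ D := (card_le_card hsub).trans hD
  obtain ⟨m, hmD, hm⟩ := exists_mem_notMem_of_card_lt_card
    ((card_image_le (f := c)).trans_lt (hblocked.trans_eq (card_range D).symm))
  refine ⟨m, mem_range.1 hmD, fun j hj hcj => lt_of_not_ge fun hfj => hm ?_⟩
  exact mem_image.2 ⟨j, mem_filter.2 ⟨hj, hfj⟩, hcj⟩

lemma isColumnAssignmentOn_insert_update [DecidableEq ι] {S : Finset ι} {a : ι} {c : ι → ℕ}
    (hc : IsColumnAssignmentOn s f S c) {m : ℕ} (hm : ∀ j ∈ S, c j = m → f j < s a) :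
    IsColumnAssignmentOn s f (insert a S) (Function.update c a m) := by
  have hfree : ∀ j ∈ S, c j = m →
      Disjoint (Set.Icc (s j) (f j)) (Set.Icc (s a) (f a)) := fun j hj hcj =>
    Set.disjoint_left.2 fun x hx hx' => (hx.2.trans_lt (hm j hj hcj)).not_ge hx'.1
  intro i hi j hj hij hcij
  by_cases hia : i = a
  · subst hia
    have hja : j ≠ i := hij.symm
    rw [Function.update_self, Function.update_of_ne hja] at hcij
    exact (hfree j ((mem_insert.1 hj).resolve_left hja) hcij.symm).symm
  by_cases hja : j = a
  · subst hja
    rw [Function.update_self, Function.update_of_ne hia] at hcij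
    exact hfree i ((mem_insert.1 hi).resolve_left hia) hcij
  rw [Function.update_of_ne hia, Function.update_of_ne hja] at hcij
  exact hc i ((mem_insert.1 hi).resolve_left hia) j ((mem_insert.1 hj).resolve_left hja) hij hcij

theorem exists_isColumnAssignmentOn_lt_of_depth_le (S : Finset ι) (hsf : ∀ i ∈ S, s i ≤ f i)
    (D : ℕ) (hD : ∀ x, #{i ∈ S | s i ≤ x ∧ x ≤ f i} ≤ D) :
    ∃ c : ι → ℕ, (∀ i ∈ S, c i < D) ∧ IsColumnAssignmentOn s f S c := by
  classical
  induction S using Finset.induction_on_max_value s with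
  | empty => exact ⟨0, by simp, by simp [IsColumnAssignmentOn]⟩
  | insert a S ha hsa ih =>
    obtain ⟨c, hcD, hc⟩ := ih (fun i hi => hsf i (mem_insert_of_mem hi))
      (fun x => (card_le_card (filter_subset_filter _ (subset_insert a S))).trans (hD x))
    obtain ⟨m, hmD, hm⟩ := exists_free_column_of_forall_start_le ha hsa
      (hsf a (mem_insert_self a S)) (hD (s a)) c
    refine ⟨Function.update c a m, fun i hi => ?_, isColumnAssignmentOn_insert_update hc hm⟩
    rcases eq_or_ne i a with rfl | hia
    · simpa using hmD
    · rw [Function.update_of_ne hia]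
      exact hcD i ((mem_insert.1 hi).resolve_left hia)

lemma card_depth_le_card_image {S : Finset ι} {c : ι → ℕ} (hc : IsColumnAssignmentOn s f S c)
    (x : α) : #{i ∈ S | s i ≤ x ∧ x ≤ f i} ≤ #(S.image c) := by
  refine card_le_card_of_injOn c (fun i hi => mem_image_of_mem c (mem_filter.1 hi).1) ?_
  intro i hi j hj hcij
  by_contra hij
  obtain ⟨hiS, hix⟩ := mem_filter.1 hi
  obtain ⟨hjS, hjx⟩ := mem_filter.1 hj
  exact Set.disjoint_left.1 (hc i hiS j hjS hij hcij) hix hjx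

end IntervalColumns

open IntervalColumns in
/-- (Interval placement, achievability; core of Theorem 2) For a finite family
of closed intervals there is a column assignment, in which intervals sharing a
column never overlap, using exactly `D` columns, where `D` is the depth of the
family (the maximum over points `x` of the number of intervals containing
`x`). -/
theorem exists_column_assignment_card_eq_depth
    {α : Type*} [LinearOrder α] {I : Type*} [Fintype I]
    (s f : I → α) (hsf : ∀ i, s i ≤ f i)
    (D : ℕ)
    (hD : IsGreatest {n : ℕ | ∃ x : α, n = Nat.card {i : I // s i ≤ x ∧ x ≤ f i}} D) :
    ∃ c : I → ℕ,
      (∀ i j : I, i ≠ j → c i = c j →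
        Disjoint (Set.Icc (s i) (f i)) (Set.Icc (s j) (f j))) ∧
      (Finset.univ.image c).card = D := by
  classical
  have hdepth (x : α) :
      Nat.card {i : I // s i ≤ x ∧ x ≤ f i} = #{i | s i ≤ x ∧ x ≤ f i} := by
    rw [Nat.card_eq_fintype_card, Fintype.card_subtype]
  obtain ⟨c, hcD, hc⟩ := exists_isColumnAssignmentOn_lt_of_depth_le univ (fun i _ => hsf i) D
    fun x => (hdepth x).symm.trans_le (hD.2 ⟨x, rfl⟩)
  refine ⟨c, fun i j => hc i (mem_univ i) j (mem_univ j), le_antisymm ?_ ?_⟩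
  · calc #(univ.image c) ≤ #(range D) :=
          card_le_card (image_subset_iff.2 fun i hi => mem_range.2 (hcD i hi))
      _ = D := card_range D
  · obtain ⟨x, hx⟩ := hD.1
    exact hx.trans_le ((hdepth x).trans_le (card_depth_le_card_image hc x))
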